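/- arXiv:2404.09523 — 3 statements merged into one kernel-verified Lean document; each statement's English description precedes it below -/
import Mathlib

section
/- For odd n and p in [1/2, 1], the majority probability P(n,p) = ∑_{i=⌈n/2⌉}^{n} C(n,i) p^i (1−p)^{n−i} is a concave function of p on the interval [1/2, 1]. -/
/-!
Each summand of `Pmaj n` is a Bernstein polynomial, and the derivatives of consecutive Bernstein
polynomials telescope: the derivative of the upper tail `∑_{ν > k} b_{n+1,ν}` is `(n + 1) b_{n,k}`.
For `n = 2m + 1` this gives `P'(p) = (2m + 1) C(2m, m) (p (1 - p))^m`, which decreases on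
`[1/2, 1]` because `p (1 - p)` does.
-/

open Finset Polynomial

noncomputable def Pmaj (n : ℕ) (p : ℝ) : ℝ :=
  ∑ i ∈ Finset.Ioc (n / 2) n, (n.choose i : ℝ) * p ^ i * (1 - p) ^ (n - i)

theorem bernsteinPolynomial.derivative_sum_Ioc (R : Type*) [CommRing R] {n k : ℕ} (hk : k ≤ n) :
    derivative (∑ ν ∈ Ioc k (n + 1), bernsteinPolynomial R (n + 1) ν) =
      (n + 1) * bernsteinPolynomial R n k := by
  rw [← Ico_add_one_add_one_eq_Ioc, ← sum_Ico_add', derivative_sum]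
  simp_rw [derivative_succ, add_tsub_cancel_right, Nat.cast_add_one, ← mul_sum]
  rw [sum_congr rfl fun i _ => (neg_sub (bernsteinPolynomial R n (i + 1)) _).symm,
    sum_neg_distrib, sum_Ico_sub _ (by omega), eq_zero_of_lt R (Nat.lt_add_one n), zero_sub,
    neg_neg]

theorem bernsteinPolynomial.antitoneOn_eval_central (m : ℕ) :
    AntitoneOn (fun p : ℝ => (bernsteinPolynomial ℝ (2 * m) m).eval p) (Set.Icc (1 / 2) 1) := by
  intro x ⟨hx, _⟩ y ⟨_, hy⟩ hxy
  have hm : 2 * m - m = m := by omega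
  simp only [bernsteinPolynomial, hm, eval_mul, eval_pow, eval_natCast, eval_sub, eval_one,
    eval_X, mul_assoc, ← mul_pow]
  gcongr (_ * ?_)
  apply pow_le_pow_left₀ <;> nlinarith

theorem Pmaj_eq_eval (n : ℕ) (p : ℝ) :
    Pmaj n p = (∑ ν ∈ Ioc (n / 2) n, bernsteinPolynomial ℝ n ν).eval p := by
  simp [Pmaj, eval_finsetSum, bernsteinPolynomial]

/-- For odd `n`, the strict-majority probability is concave in `p` on `[1/2, 1]`. -/
theorem Pmaj_concaveOn (n : ℕ) (hn : Odd n) :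
    ConcaveOn ℝ (Set.Icc (1 / 2 : ℝ) 1) (fun p => Pmaj n p) := by
  obtain ⟨m, rfl⟩ := hn
  have hhalf : (2 * m + 1) / 2 = m := by omega
  simp_rw [Pmaj_eq_eval, hhalf]
  refine AntitoneOn.concaveOn_of_deriv (convex_Icc _ _) (Polynomial.continuousOn _)
    (Polynomial.differentiable _).differentiableOn ?_
  intro x hx y hy hxy
  simp only [Polynomial.deriv,
    bernsteinPolynomial.derivative_sum_Ioc ℝ (Nat.le_mul_of_pos_left m two_pos),
    eval_mul, eval_add, eval_natCast, eval_one]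
  exact mul_le_mul_of_nonneg_left
    (bernsteinPolynomial.antitoneOn_eval_central m (interior_subset hx) (interior_subset hy) hxy)
    (by positivity)
end

section
/- The derivative of P(n,p) with respect to p, evaluated at p = 1/2, equals n·C(n−1, (n−1)/2)·2^{1−n} for odd n, and this quantity is asymptotic to √(2n/π) as n → ∞. -/
open Filter

/-!
The majority probability is a sum of Bernstein basis polynomials, whose derivatives telescope:
`P'(n + 1, p) = (n + 1) b_{n, ⌈n/2⌉}(p)`. For `n + 1 = 2m + 1` and `p = 1/2` this is
`(2m + 1) C(2m, m) / 4^m`, whose square is `(2m + 1) / W_m` with `W_m` the `m`-th Wallis partial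
product. Hence the ratio in question is exactly `√((π / 2) / W_m)`, which tends to `1` by
Wallis' formula.
-/

open Finset Polynomial Real
open scoped Nat

theorem derivative_sum_Ioc_bernsteinPolynomial {R : Type*} [CommRing R] (n k : ℕ) :
    derivative (∑ i ∈ Ioc k (n + 1), bernsteinPolynomial R (n + 1) i) =
      (n + 1) * bernsteinPolynomial R n k := by
  rcases le_or_gt k n with hk | hk
  · have htelescope := sum_Ico_sub (bernsteinPolynomial R n ·) (by omega : k ≤ n + 1)
    have htop : bernsteinPolynomial R n (n + 1) = 0 := by
      simp [bernsteinPolynomial, Nat.choose_succ_self]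
    rw [← Ico_add_one_add_one_eq_Ioc, ← sum_Ico_add', derivative_sum]
    simp only [bernsteinPolynomial.derivative_succ_aux, ← mul_sum, sum_sub_distrib]
      at htelescope ⊢
    linear_combination (-(n + 1 : R[X])) * htelescope - (n + 1 : R[X]) * htop
  · have : Ioc k (n + 1) = ∅ := Ioc_eq_empty_of_le hk
    simp [this, bernsteinPolynomial, Nat.choose_eq_zero_of_lt hk]

theorem Pmaj_eq_eval_sum_bernsteinPolynomial (n : ℕ) (p : ℝ) :
    Pmaj n p = (∑ i ∈ Ioc (n / 2) n, bernsteinPolynomial ℝ n i).eval p := by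
  simp [Pmaj, eval_finsetSum, bernsteinPolynomial]

theorem hasDerivAt_Pmaj_succ (n : ℕ) (p : ℝ) :
    HasDerivAt (Pmaj (n + 1)) ((n + 1) * (bernsteinPolynomial ℝ n ((n + 1) / 2)).eval p) p := by
  have h := (∑ i ∈ Ioc ((n + 1) / 2) (n + 1), bernsteinPolynomial ℝ (n + 1) i).hasDerivAt p
  rw [derivative_sum_Ioc_bernsteinPolynomial] at h
  simpa [funext (Pmaj_eq_eval_sum_bernsteinPolynomial (n + 1))] using h

theorem bernsteinPolynomial_two_mul_eval_half (m : ℕ) :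
    (bernsteinPolynomial ℝ (2 * m) m).eval (1 / 2) = m.centralBinom / 4 ^ m := by
  rw [bernsteinPolynomial, Nat.centralBinom_eq_two_mul_choose, show 2 * m - m = m by omega]
  simp only [eval_mul, eval_pow, eval_X, eval_sub, eval_one, eval_natCast]
  rw [mul_assoc, ← mul_pow, show (1 / 2 : ℝ) * (1 - 1 / 2) = 4⁻¹ by norm_num, inv_pow,
    div_eq_mul_inv]

theorem deriv_Pmaj_two_mul_add_one_half (m : ℕ) :
    deriv (fun p => Pmaj (2 * m + 1) p) (1 / 2) = (2 * m + 1) * m.centralBinom / 4 ^ m := by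
  rw [(hasDerivAt_Pmaj_succ (2 * m) (1 / 2)).deriv, show (2 * m + 1) / 2 = m by omega,
    bernsteinPolynomial_two_mul_eval_half]
  push_cast
  ring

theorem Real.Wallis.W_eq_centralBinom (m : ℕ) :
    Wallis.W m = (4 ^ m / m.centralBinom) ^ 2 / (2 * m + 1) := by
  have hfact : ((2 * m)! : ℝ) = m.centralBinom * m ! * m ! := by
    have := Nat.choose_mul_factorial_mul_factorial (by omega : m ≤ 2 * m)
    rw [show 2 * m - m = m by omega, ← Nat.centralBinom_eq_two_mul_choose] at this
    exact_mod_cast this.symm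
  have hpos : (0 : ℝ) < m.centralBinom := by exact_mod_cast m.centralBinom_pos
  rw [Wallis.W_eq_factorial_ratio, hfact, pow_mul, show (2 : ℝ) ^ 4 = 4 ^ 2 by norm_num, ← pow_mul,
    mul_comm 2 m, pow_mul]
  field_simp

theorem mul_centralBinom_div_four_pow_eq_sqrt (m : ℕ) :
    (2 * m + 1) * m.centralBinom / 4 ^ m = √((2 * m + 1) / Wallis.W m) := by
  have hpos : (0 : ℝ) < m.centralBinom := by exact_mod_cast m.centralBinom_pos
  rw [Wallis.W_eq_centralBinom, eq_comm, sqrt_eq_iff_mul_self_eq_of_pos (by positivity)]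
  field_simp

theorem tendsto_mul_centralBinom_div_four_pow_div_sqrt :
    Tendsto (fun m : ℕ => (2 * m + 1) * m.centralBinom / 4 ^ m / √(2 * (2 * m + 1) / π))
      atTop (nhds 1) := by
  have h : ∀ m : ℕ, (2 * m + 1) * m.centralBinom / 4 ^ m / √(2 * (2 * m + 1) / π) =
      √((π / 2) / Wallis.W m) := by
    intro m
    rw [mul_centralBinom_div_four_pow_eq_sqrt, ← sqrt_div' _ (by positivity)]
    congr 1
    field_simp
  have hW := (tendsto_const_nhds (x := π / 2)).div Wallis.tendsto_W_nhds_pi_div_two (by positivity)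
  simpa [h, div_self pi_div_two_pos.ne'] using hW.sqrt

/-- The derivative of the majority probability at `p = 1/2` equals
`n·C(n−1,(n−1)/2)·2^{1−n}` for odd `n`, and this quantity is asymptotic to
`√(2n/π)` as `n → ∞`. -/
theorem Pmaj_deriv_at_half :
    (∀ n : ℕ, Odd n →
      deriv (fun p => Pmaj n p) (1 / 2) =
        (n : ℝ) * ((n - 1).choose ((n - 1) / 2) : ℝ) * (2 : ℝ) ^ (1 - (n : ℤ))) ∧
    Tendsto (fun k : ℕ =>
        deriv (fun p => Pmaj (2 * k + 1) p) (1 / 2) /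
          Real.sqrt (2 * (2 * k + 1) / Real.pi)) atTop (nhds 1) := by
  refine ⟨?_, by simpa only [deriv_Pmaj_two_mul_add_one_half]
    using tendsto_mul_centralBinom_div_four_pow_div_sqrt⟩
  rintro n ⟨m, rfl⟩
  have hexp : (2 : ℝ) ^ (1 - ((2 * m + 1 : ℕ) : ℤ)) = (4 ^ m)⁻¹ := by
    rw [show (1 : ℤ) - (2 * m + 1 : ℕ) = -(2 * m : ℕ) by push_cast; ring, zpow_neg, zpow_natCast,
      pow_mul]
    norm_num
  rw [deriv_Pmaj_two_mul_add_one_half, Nat.add_sub_cancel, Nat.mul_div_cancel_left m two_pos,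
    ← Nat.centralBinom_eq_two_mul_choose, hexp]
  push_cast
  ring
end

section
/- For odd n and common individual competence p with 1/2 < p < 1, the strict-majority probability P(n,p) is strictly greater than p for all n ≥ 3, i.e., the majority vote amplifies any individual competence strictly above 1/2. -/
/-!
Adding two voters to an electorate of `2k + 1` changes the outcome only when the old vote was
`k + 1 : k` or `k : k + 1` and both newcomers vote the other way. Hence
`P(2k+3, p) - P(2k+1, p) = C(2k+1, k) (p (1 - p))^(k+1) (2p - 1)`, which is positive for
`1/2 < p < 1`, while `P(1, p) = p`.
-/

open Finset

noncomputable section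

def binomTerm (n i : ℕ) (p : ℝ) : ℝ := n.choose i * p ^ i * (1 - p) ^ (n - i)

def binomTail (n m : ℕ) (p : ℝ) : ℝ := ∑ i ∈ Ico m (n + 1), binomTerm n i p

end

variable {n m N : ℕ} {p : ℝ}

theorem binomTerm_eq_zero_of_lt {i : ℕ} (h : n < i) : binomTerm n i p = 0 := by
  simp [binomTerm, Nat.choose_eq_zero_of_lt h]

theorem binomTerm_succ_succ (n i : ℕ) (p : ℝ) :
    binomTerm (n + 1) (i + 1) p = p * binomTerm n i p + (1 - p) * binomTerm n (i + 1) p := by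
  rcases lt_or_ge n (i + 1) with h | h
  · rw [binomTerm_eq_zero_of_lt h, binomTerm, binomTerm, Nat.choose_succ_succ',
      Nat.choose_eq_zero_of_lt h, Nat.succ_sub_succ]
    simp only [add_zero, mul_zero]
    ring
  · obtain ⟨j, rfl⟩ := Nat.exists_eq_add_of_le h
    simp only [binomTerm, Nat.choose_succ_succ', Nat.cast_add,
      show i + 1 + j + 1 - (i + 1) = j + 1 by omega, show i + 1 + j - i = j + 1 by omega,
      show i + 1 + j - (i + 1) = j by omega]
    ring

theorem binomTail_eq_sum_Ico (hN : n + 1 ≤ N) :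
    binomTail n m p = ∑ i ∈ Ico m N, binomTerm n i p := by
  refine sum_subset (Ico_subset_Ico_right hN) fun i hi hi' => binomTerm_eq_zero_of_lt ?_
  simp only [mem_Ico] at hi hi'
  omega

theorem binomTail_eq_binomTerm_add (n m : ℕ) (p : ℝ) :
    binomTail n m p = binomTerm n m p + binomTail n (m + 1) p := by
  rw [binomTail_eq_sum_Ico (N := n + m + 2) (by omega),
    binomTail_eq_sum_Ico (N := n + m + 2) (by omega), sum_eq_sum_Ico_succ_bot (by omega)]

theorem binomTail_succ_succ (n m : ℕ) (p : ℝ) :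
    binomTail (n + 1) (m + 1) p = p * binomTail n m p + (1 - p) * binomTail n (m + 1) p := by
  rw [binomTail, ← sum_Ico_add' (c := 1), binomTail, binomTail_eq_sum_Ico (N := n + 2) (by omega),
    ← sum_Ico_add' (c := 1), mul_sum, mul_sum, ← sum_add_distrib]
  exact sum_congr rfl fun i _ => binomTerm_succ_succ n i p

theorem binomTail_add_two (n m : ℕ) (p : ℝ) :
    binomTail (n + 2) (m + 2) p = binomTail n (m + 1) p
      + p ^ 2 * binomTerm n m p - (1 - p) ^ 2 * binomTerm n (m + 1) p := by
  rw [binomTail_succ_succ, binomTail_succ_succ, binomTail_succ_succ,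
    binomTail_eq_binomTerm_add n m, binomTail_eq_binomTerm_add n (m + 1)]
  ring

theorem Pmaj_eq_binomTail (n : ℕ) (p : ℝ) : Pmaj n p = binomTail n (n / 2 + 1) p := by
  rw [Pmaj, binomTail, Ico_add_one_add_one_eq_Ioc]
  rfl

theorem Pmaj_one (p : ℝ) : Pmaj 1 p = p := by
  simp [Pmaj]

theorem Pmaj_add_two (k : ℕ) (p : ℝ) :
    Pmaj (2 * k + 1 + 2) p =
      Pmaj (2 * k + 1) p + (2 * k + 1).choose k * (p * (1 - p)) ^ (k + 1) * (2 * p - 1) := by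
  have h₁ : (2 * k + 1 + 2) / 2 + 1 = k + 2 := by omega
  have h₂ : (2 * k + 1) / 2 + 1 = k + 1 := by omega
  rw [Pmaj_eq_binomTail, Pmaj_eq_binomTail, h₁, h₂, binomTail_add_two, binomTerm, binomTerm,
    Nat.choose_symm_half, show 2 * k + 1 - k = k + 1 by omega,
    show 2 * k + 1 - (k + 1) = k by omega, mul_pow]
  ring

theorem Pmaj_lt_Pmaj_add_two (hp : 1 / 2 < p) (hp1 : p < 1) (k : ℕ) :
    Pmaj (2 * k + 1) p < Pmaj (2 * k + 1 + 2) p := by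
  rw [Pmaj_add_two, lt_add_iff_pos_right]
  have hC : (0 : ℝ) < (2 * k + 1).choose k := by exact_mod_cast Nat.choose_pos (by omega)
  have hpq : 0 < p * (1 - p) := mul_pos (by linarith) (by linarith)
  have hp2 : 0 < 2 * p - 1 := by linarith
  positivity

/-- For odd `n ≥ 3` and `1/2 < p < 1`, majority voting strictly amplifies the
individual competence: `P(n,p) > p`. -/
theorem majority_amplifies (n : ℕ) (hn : Odd n) (h3 : 3 ≤ n)
    (p : ℝ) (hp : 1 / 2 < p) (hp1 : p < 1) :
    p < Pmaj n p := by
  obtain ⟨k, rfl⟩ := hn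
  have hmono : StrictMono fun k => Pmaj (2 * k + 1) p :=
    strictMono_nat_of_lt_succ fun k => Pmaj_lt_Pmaj_add_two hp hp1 k
  calc p = Pmaj (2 * 0 + 1) p := (Pmaj_one p).symm
    _ < Pmaj (2 * k + 1) p := hmono (by omega)
end
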